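/- Fix p > 1 and let a be the sequence defined in the context. Then for every N ∈ ℕ: Σ_{k=1}^{6N+5} a_k sin(2πk/3) = sin(2π/3) · Σ_{k=0}^{N} [ (a_{6k+1} − a_{6k+2}) + (a_{6k+4} − a_{6k+5}) ] ≥ 4 sin(2π/3) · Σ_{k=0}^{N} 1/((6k+5) ln(6k+5)); consequently the partial sums Σ_{k=1}^{M} a_k sin(2πk/3) tend to +∞ as M → ∞, and the series Σ_{k=1}^∞ a_k sin(2πk/3) diverges. -/
import Mathlib


noncomputable section

/-- The sequence from the counterexample: `a_n = 3/(n ln(n+1))` if `n ≡ 1 (mod 3)`;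
`a_n = 1/((n−3) ln(n−2)) + 1/(n^{1+1/p} ln(n+1))` if `n ≡ 0 (mod 6)`;
`a_n = 1/(n ln(n+1))` otherwise. -/
noncomputable def aseq (p : ℝ) (n : ℕ) : ℝ :=
  if n % 3 = 1 then 3 / ((n : ℝ) * Real.log ((n : ℝ) + 1))
  else if n % 6 = 0 then
    1 / (((n : ℝ) - 3) * Real.log ((n : ℝ) - 2)) +
      1 / ((n : ℝ) ^ (1 + 1/p) * Real.log ((n : ℝ) + 1))
  else 1 / ((n : ℝ) * Real.log ((n : ℝ) + 1))

open Real Finset Filter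

lemma s_pos : 0 < Real.sin (2 * Real.pi / 3) := by
  apply Real.sin_pos_of_pos_of_lt_pi <;> nlinarith [Real.pi_pos]

lemma sin_eval (k : ℕ) : Real.sin (2 * Real.pi * k / 3) =
    if k % 3 = 1 then Real.sin (2 * Real.pi / 3)
    else if k % 3 = 2 then -Real.sin (2 * Real.pi / 3) else 0 := by
  obtain ⟨q, r, hr, rfl⟩ : ∃ q r, r < 3 ∧ k = 3 * q + r :=
    ⟨k / 3, k % 3, Nat.mod_lt _ (by norm_num), (Nat.div_add_mod k 3).symm⟩
  have hx : 2 * Real.pi * ((3 * q + r : ℕ) : ℝ) / 3 = 2 * Real.pi * r / 3 + q * (2 * Real.pi) := by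
    push_cast; ring
  rw [hx, Real.sin_add_nat_mul_two_pi]
  interval_cases r
  · norm_num
  · simp only [Nat.mul_add_mod]
    norm_num
  · have h2 : 2 * Real.pi * (2 : ℕ) / 3 = -(2 * Real.pi / 3) + (1 : ℕ) * (2 * Real.pi) := by
      push_cast; ring
    rw [h2, Real.sin_add_nat_mul_two_pi, Real.sin_neg]
    simp only [Nat.mul_add_mod]
    norm_num

lemma sum_blocks (f : ℕ → ℝ) (hf : ∀ k, k % 3 = 0 → f k = 0) (N : ℕ) :
    ∑ k ∈ Finset.Icc 1 (6*N+5), f k =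
      ∑ k ∈ Finset.range (N+1), (f (6*k+1) + f (6*k+2) + f (6*k+4) + f (6*k+5)) := by
  induction N with
  | zero =>
    have h : Finset.Icc 1 5 = {1, 2, 3, 4, 5} := by decide
    simp only [Nat.mul_zero, Nat.zero_add, h, Finset.sum_range_one]
    rw [Finset.sum_insert (by decide), Finset.sum_insert (by decide),
      Finset.sum_insert (by decide), Finset.sum_insert (by decide), Finset.sum_singleton]
    rw [hf 3 rfl]
    ring
  | succ N ih =>
    have e : 6*(N+1)+5 = (6*N+10)+1 := by ring
    rw [e, Finset.sum_Icc_succ_top (by omega), show 6*N+10 = (6*N+9)+1 from rfl,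
      Finset.sum_Icc_succ_top (by omega), show 6*N+9 = (6*N+8)+1 from rfl,
      Finset.sum_Icc_succ_top (by omega), show 6*N+8 = (6*N+7)+1 from rfl,
      Finset.sum_Icc_succ_top (by omega), show 6*N+7 = (6*N+6)+1 from rfl,
      Finset.sum_Icc_succ_top (by omega), show 6*N+6 = (6*N+5)+1 from rfl,
      Finset.sum_Icc_succ_top (by omega), ih,
      hf (6*N+5+1) (by omega), hf (6*N+8+1) (by omega),
      Finset.sum_range_succ _ (N+1),
      show 6*(N+1)+1 = 6*N+5+1+1 from by ring,
      show 6*(N+1)+2 = 6*N+5+1+1+1 from by ring,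
      show 6*(N+1)+4 = 6*N+5+1+1+1+1+1 from by ring,
      show 6*(N+1)+5 = 6*N+5+1+1+1+1+1+1 from by ring]
    ring

lemma aseq_mod1 (p : ℝ) (n : ℕ) (h : n % 3 = 1) :
    aseq p n = 3 / ((n : ℝ) * Real.log ((n : ℝ) + 1)) := by rw [aseq, if_pos h]

lemma aseq_other (p : ℝ) (n : ℕ) (h3 : n % 3 ≠ 1) (h6 : n % 6 ≠ 0) :
    aseq p n = 1 / ((n : ℝ) * Real.log ((n : ℝ) + 1)) := by rw [aseq, if_neg h3, if_neg h6]

lemma block_ge (p : ℝ) (k : ℕ) :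
    4 / ((6*(k:ℝ)+5) * Real.log (6*(k:ℝ)+5)) ≤
      (aseq p (6*k+1) - aseq p (6*k+2)) + (aseq p (6*k+4) - aseq p (6*k+5)) := by
  have hx : (0:ℝ) ≤ (k:ℝ) := Nat.cast_nonneg k
  set x := (k:ℝ) with hxdef
  have e1 : aseq p (6*k+1) = 3 / ((6*x+1) * Real.log (6*x+2)) := by
    rw [aseq_mod1 p _ (by omega)]; push_cast
    rw [show (6*x+1)+1 = 6*x+2 by ring]
  have e2 : aseq p (6*k+2) = 1 / ((6*x+2) * Real.log (6*x+3)) := by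
    rw [aseq_other p _ (by omega) (by omega)]; push_cast
    rw [show (6*x+2)+1 = 6*x+3 by ring]
  have e4 : aseq p (6*k+4) = 3 / ((6*x+4) * Real.log (6*x+5)) := by
    rw [aseq_mod1 p _ (by omega)]; push_cast
    rw [show (6*x+4)+1 = 6*x+5 by ring]
  have e5 : aseq p (6*k+5) = 1 / ((6*x+5) * Real.log (6*x+6)) := by
    rw [aseq_other p _ (by omega) (by omega)]; push_cast
    rw [show (6*x+5)+1 = 6*x+6 by ring]
  rw [e1, e2, e4, e5]
  have hL2 : 0 < Real.log (6*x+2) := Real.log_pos (by linarith)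
  have hL3 : 0 < Real.log (6*x+3) := Real.log_pos (by linarith)
  have hL5 : 0 < Real.log (6*x+5) := Real.log_pos (by linarith)
  have hL6 : 0 < Real.log (6*x+6) := Real.log_pos (by linarith)
  have hL23 : Real.log (6*x+2) ≤ Real.log (6*x+3) := Real.log_le_log (by linarith) (by linarith)
  have hL35 : Real.log (6*x+3) ≤ Real.log (6*x+5) := Real.log_le_log (by linarith) (by linarith)
  have hL56 : Real.log (6*x+5) ≤ Real.log (6*x+6) := Real.log_le_log (by linarith) (by linarith)
  have hD2 : (0:ℝ) < (6*x+1) * Real.log (6*x+2) := by positivity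
  have hD3 : (0:ℝ) < (6*x+2) * Real.log (6*x+3) := by positivity
  have hD5 : (0:ℝ) < (6*x+5) * Real.log (6*x+5) := by positivity
  have hD4 : (0:ℝ) < (6*x+4) * Real.log (6*x+5) := by positivity
  have hD6 : (0:ℝ) < (6*x+5) * Real.log (6*x+6) := by positivity
  -- first pair
  have h1 : 3 / ((6*x+2) * Real.log (6*x+3)) ≤ 3 / ((6*x+1) * Real.log (6*x+2)) := by
    gcongr <;> linarith
  have h2 : 2 / ((6*x+5) * Real.log (6*x+5)) ≤ 2 / ((6*x+2) * Real.log (6*x+3)) := by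
    gcongr <;> linarith
  -- second pair
  have h4 : 3 / ((6*x+5) * Real.log (6*x+5)) ≤ 3 / ((6*x+4) * Real.log (6*x+5)) := by
    gcongr <;> linarith
  have h5 : 1 / ((6*x+5) * Real.log (6*x+6)) ≤ 1 / ((6*x+5) * Real.log (6*x+5)) := by
    gcongr <;> linarith
  have key : 3 / ((6*x+2) * Real.log (6*x+3)) - 1 / ((6*x+2) * Real.log (6*x+3))
      = 2 / ((6*x+2) * Real.log (6*x+3)) := by ring
  have key2 : 4 / ((6*x+5) * Real.log (6*x+5))
      = 2 / ((6*x+5) * Real.log (6*x+5)) + 3 / ((6*x+5) * Real.log (6*x+5))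
        - 1 / ((6*x+5) * Real.log (6*x+5)) := by ring
  linarith

lemma tele {a b : ℝ} (ha : 2 ≤ a) (hab : a ≤ b) :
    Real.log (Real.log b) - Real.log (Real.log a) ≤ (b - a) / (a * Real.log a) := by
  have ha0 : (0:ℝ) < a := by linarith
  have hA : 0 < Real.log a := Real.log_pos (by linarith)
  have hB : Real.log a ≤ Real.log b := Real.log_le_log ha0 hab
  have h1 : Real.log (Real.log b) - Real.log (Real.log a)
      = Real.log (Real.log b / Real.log a) := by
    rw [Real.log_div (by linarith) (ne_of_gt hA)]
  have hB0 : 0 < Real.log b := lt_of_lt_of_le hA hB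
  have h2 : Real.log (Real.log b / Real.log a) ≤ Real.log b / Real.log a - 1 :=
    Real.log_le_sub_one_of_pos (div_pos hB0 hA)
  have h3 : Real.log b - Real.log a ≤ (b - a) / a := by
    have h4 := Real.log_le_sub_one_of_pos (div_pos (show (0:ℝ) < b by linarith) ha0)
    rw [Real.log_div (by linarith) (ne_of_gt ha0)] at h4
    have : b / a - 1 = (b - a) / a := by field_simp
    linarith
  have h5 : Real.log b / Real.log a - 1 = (Real.log b - Real.log a) / Real.log a := by
    field_simp
  have h6 : (Real.log b - Real.log a) / Real.log a ≤ ((b - a) / a) / Real.log a := by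
    gcongr
  rw [h1]
  calc Real.log (Real.log b / Real.log a) ≤ Real.log b / Real.log a - 1 := h2
    _ = (Real.log b - Real.log a) / Real.log a := h5
    _ ≤ ((b - a) / a) / Real.log a := h6
    _ = (b - a) / (a * Real.log a) := by rw [div_div]

lemma sum_lb (N : ℕ) :
    (Real.log (Real.log (6*(N:ℝ)+11)) - Real.log (Real.log 5)) / 6 ≤
      ∑ k ∈ Finset.range (N+1), 1 / ((6*(k:ℝ)+5) * Real.log (6*(k:ℝ)+5)) := by
  have hterm : ∀ k : ℕ,
      Real.log (Real.log (6*((k:ℝ)+1)+5)) / 6 - Real.log (Real.log (6*(k:ℝ)+5)) / 6 ≤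
        1 / ((6*(k:ℝ)+5) * Real.log (6*(k:ℝ)+5)) := by
    intro k
    have hx : (0:ℝ) ≤ (k:ℝ) := Nat.cast_nonneg k
    have h := tele (a := 6*(k:ℝ)+5) (b := 6*(k:ℝ)+11) (by linarith) (by linarith)
    have e : (6*(k:ℝ)+11 - (6*(k:ℝ)+5)) = 6 := by ring
    rw [e] at h
    have e2 : 6*((k:ℝ)+1)+5 = 6*(k:ℝ)+11 := by ring
    rw [e2]
    have hD : (0:ℝ) < (6*(k:ℝ)+5) * Real.log (6*(k:ℝ)+5) := by
      have := Real.log_pos (show (1:ℝ) < 6*(k:ℝ)+5 by linarith)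
      positivity
    rw [div_sub_div_same]
    calc (Real.log (Real.log (6*(k:ℝ)+11)) - Real.log (Real.log (6*(k:ℝ)+5))) / 6
        ≤ (6 / ((6*(k:ℝ)+5) * Real.log (6*(k:ℝ)+5))) / 6 := by gcongr
      _ = 1 / ((6*(k:ℝ)+5) * Real.log (6*(k:ℝ)+5)) := by ring
  calc (Real.log (Real.log (6*(N:ℝ)+11)) - Real.log (Real.log 5)) / 6
      = ∑ k ∈ Finset.range (N+1),
          (Real.log (Real.log (6*((k+1 : ℕ):ℝ)+5)) / 6 - Real.log (Real.log (6*(k:ℝ)+5)) / 6) := by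
        rw [Finset.sum_range_sub (fun k : ℕ => Real.log (Real.log (6*(k:ℝ)+5)) / 6) (N+1)]
        push_cast
        ring_nf
    _ ≤ _ := Finset.sum_le_sum fun k _ => by push_cast; exact hterm k

lemma aseq_nonneg (p : ℝ) (n : ℕ) (hn : 1 ≤ n) : 0 ≤ aseq p n := by
  have hn0 : (0:ℝ) ≤ (n:ℝ) := Nat.cast_nonneg n
  have hlog : (0:ℝ) ≤ Real.log ((n:ℝ) + 1) := Real.log_nonneg (by linarith)
  rw [aseq]
  split_ifs with h1 h2
  · positivity
  · have h6 : 6 ≤ n := by omega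
    have h6' : (6:ℝ) ≤ (n:ℝ) := by exact_mod_cast h6
    have hl2 : (0:ℝ) ≤ Real.log ((n:ℝ) - 2) := Real.log_nonneg (by linarith)
    have hr : (0:ℝ) ≤ (n:ℝ) ^ (1 + 1/p) := Real.rpow_nonneg hn0 _
    have : (0:ℝ) ≤ ((n:ℝ) - 3) * Real.log ((n:ℝ) - 2) := by
      apply mul_nonneg (by linarith) hl2
    positivity
  · positivity

lemma aseq_le_one (p : ℝ) (N : ℕ) : aseq p (6*N+8) ≤ 1 := by
  rw [aseq_other p _ (by omega) (by omega)]
  have h8 : (8:ℝ) ≤ ((6*N+8:ℕ):ℝ) := by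
    push_cast; linarith [Nat.cast_nonneg (α := ℝ) N]
  have hlog : 1 ≤ Real.log (((6*N+8:ℕ):ℝ) + 1) := by
    rw [Real.le_log_iff_exp_le (by linarith)]
    calc Real.exp 1 ≤ 2.7182818286 := Real.exp_one_lt_d9.le
      _ ≤ ((6*N+8:ℕ):ℝ) + 1 := by linarith
  rw [div_le_one (by nlinarith)]
  nlinarith

theorem statement12 (p : ℝ) (hp : 1 < p) :
    (∀ N : ℕ,
      (∑ k ∈ Finset.Icc 1 (6*N+5), aseq p k * Real.sin (2 * Real.pi * k / 3) =
        Real.sin (2 * Real.pi / 3) *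
          ∑ k ∈ Finset.range (N+1),
            ((aseq p (6*k+1) - aseq p (6*k+2)) + (aseq p (6*k+4) - aseq p (6*k+5)))) ∧
      (4 * Real.sin (2 * Real.pi / 3) *
          ∑ k ∈ Finset.range (N+1), 1 / ((6*(k : ℝ)+5) * Real.log (6*(k : ℝ)+5)) ≤
        ∑ k ∈ Finset.Icc 1 (6*N+5), aseq p k * Real.sin (2 * Real.pi * k / 3))) ∧
    Filter.Tendsto
      (fun M : ℕ => ∑ k ∈ Finset.Icc 1 M, aseq p k * Real.sin (2 * Real.pi * k / 3))
      Filter.atTop Filter.atTop := by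
  have hspos := s_pos
  set s := Real.sin (2 * Real.pi / 3) with hs
  set f : ℕ → ℝ := fun k => aseq p k * Real.sin (2 * Real.pi * k / 3) with hfdef
  have hf0 : ∀ k : ℕ, k % 3 = 0 → f k = 0 := by
    intro k hk
    rw [hfdef]
    simp only [sin_eval, if_neg (by omega : ¬ k % 3 = 1), if_neg (by omega : ¬ k % 3 = 2),
      mul_zero]
  have hEq : ∀ N : ℕ, ∑ k ∈ Finset.Icc 1 (6*N+5), f k =
      s * ∑ k ∈ Finset.range (N+1),
        ((aseq p (6*k+1) - aseq p (6*k+2)) + (aseq p (6*k+4) - aseq p (6*k+5))) := by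
    intro N
    rw [sum_blocks f hf0 N, Finset.mul_sum]
    refine Finset.sum_congr rfl fun k _ => ?_
    have c1 : (6*k+1) % 3 = 1 := by omega
    have c2 : (6*k+2) % 3 = 2 := by omega
    have c4 : (6*k+4) % 3 = 1 := by omega
    have c5 : (6*k+5) % 3 = 2 := by omega
    rw [hfdef]
    simp only [sin_eval, c1, c2, c4, c5]
    norm_num
    ring
  have hpart : ∀ N : ℕ,
      (∑ k ∈ Finset.Icc 1 (6*N+5), f k =
        s * ∑ k ∈ Finset.range (N+1),
          ((aseq p (6*k+1) - aseq p (6*k+2)) + (aseq p (6*k+4) - aseq p (6*k+5)))) ∧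
      (4 * s * ∑ k ∈ Finset.range (N+1), 1 / ((6*(k : ℝ)+5) * Real.log (6*(k : ℝ)+5)) ≤
        ∑ k ∈ Finset.Icc 1 (6*N+5), f k) := by
    intro N
    refine ⟨hEq N, ?_⟩
    rw [hEq N]
    have e : 4 * s * ∑ k ∈ Finset.range (N+1), 1 / ((6*(k:ℝ)+5) * Real.log (6*(k:ℝ)+5))
        = s * ∑ k ∈ Finset.range (N+1), 4 / ((6*(k:ℝ)+5) * Real.log (6*(k:ℝ)+5)) := by
      rw [Finset.mul_sum, Finset.mul_sum]
      refine Finset.sum_congr rfl fun k _ => ?_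
      ring
    rw [e]
    exact mul_le_mul_of_nonneg_left
      (Finset.sum_le_sum fun k _ => block_ge p k) hspos.le
  refine ⟨hpart, ?_⟩
  set T : ℕ → ℝ := fun N =>
    4 * s * ∑ k ∈ Finset.range (N+1), 1 / ((6*(k:ℝ)+5) * Real.log (6*(k:ℝ)+5)) with hT
  have hTtop : Filter.Tendsto T Filter.atTop Filter.atTop := by
    have h0 : Filter.Tendsto (fun N : ℕ => (6*(N:ℝ)+11)) Filter.atTop Filter.atTop := by
      apply Filter.tendsto_atTop_mono (fun n : ℕ => ?_) tendsto_natCast_atTop_atTop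
      linarith [Nat.cast_nonneg (α := ℝ) n]
    have h1 : Filter.Tendsto
        (fun N : ℕ => Real.log (Real.log (6*(N:ℝ)+11))) Filter.atTop Filter.atTop :=
      Real.tendsto_log_atTop.comp (Real.tendsto_log_atTop.comp h0)
    have h2 : Filter.Tendsto
        (fun N : ℕ => 4 * s * ((Real.log (Real.log (6*(N:ℝ)+11)) - Real.log (Real.log 5)) / 6))
        Filter.atTop Filter.atTop := by
      apply Filter.Tendsto.const_mul_atTop (by positivity : (0:ℝ) < 4 * s)
      apply Filter.Tendsto.atTop_div_const (by norm_num)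
      exact Filter.tendsto_atTop_add_const_right _ _ h1
    apply Filter.tendsto_atTop_mono (fun N => ?_) h2
    have := sum_lb N
    rw [hT]
    nlinarith [this]
  have hdrop : ∀ M : ℕ, 5 ≤ M → T ((M - 5)/6) - s ≤ ∑ k ∈ Finset.Icc 1 M, f k := by
    intro M hM
    set N := (M - 5)/6 with hN
    have h1 : 6*N+5 ≤ M := by omega
    have h2 : M ≤ 6*N+10 := by omega
    have hsplit : ∑ k ∈ Finset.Icc 1 M, f k =
        ∑ k ∈ Finset.Icc 1 (6*N+5), f k + ∑ j ∈ Finset.Ioc (6*N+5) M, f j := by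
      rw [show (1:ℕ) = 0+1 from rfl, Finset.Icc_add_one_left_eq_Ioc, Finset.Icc_add_one_left_eq_Ioc,
        Finset.sum_Ioc_consecutive _ (Nat.zero_le (6*N+5)) h1]
    have htail : -s ≤ ∑ j ∈ Finset.Ioc (6*N+5) M, f j := by
      have hle : ∑ j ∈ Finset.Ioc (6*N+5) M, (if j = 6*N+8 then -s else 0) ≤
          ∑ j ∈ Finset.Ioc (6*N+5) M, f j := by
        refine Finset.sum_le_sum fun j hj => ?_
        rw [Finset.mem_Ioc] at hj
        by_cases hj8 : j = 6*N+8
        · subst hj8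
          rw [if_pos rfl, hfdef]
          simp only [sin_eval, if_neg (by omega : ¬ (6*N+8) % 3 = 1),
            if_pos (by omega : (6*N+8) % 3 = 2)]
          have ha0 : 0 ≤ aseq p (6*N+8) := aseq_nonneg p _ (by omega)
          have ha1 : aseq p (6*N+8) ≤ 1 := aseq_le_one p N
          nlinarith
        · rw [if_neg hj8, hfdef]
          have hmod : (6*N+8) % 3 = 2 := by omega
          have hj2 : j % 3 ≠ 2 := by omega
          simp only [sin_eval, if_neg hj2]
          have ha0 : 0 ≤ aseq p j := aseq_nonneg p _ (by omega)
          split_ifs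
          · positivity
          · simp
      refine le_trans ?_ hle
      rw [Finset.sum_ite_eq' (Finset.Ioc (6*N+5) M) (6*N+8) (fun _ => -s)]
      split_ifs
      · exact le_rfl
      · linarith
    have hTS := (hpart N).2
    have hTN : T N = 4 * s * ∑ k ∈ Finset.range (N+1),
        1 / ((6*(k:ℝ)+5) * Real.log (6*(k:ℝ)+5)) := rfl
    rw [hsplit, hTN]
    linarith
  have hcomp : Filter.Tendsto (fun M : ℕ => (M - 5)/6) Filter.atTop Filter.atTop :=
    Filter.tendsto_atTop_atTop.2 fun b => ⟨6*b+5, fun a ha => by omega⟩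
  have h4 : Filter.Tendsto (fun M : ℕ => T ((M - 5)/6) - s) Filter.atTop Filter.atTop := by
    have := Filter.tendsto_atTop_add_const_right Filter.atTop (-s) (hTtop.comp hcomp)
    simpa [sub_eq_add_neg, Function.comp] using this
  refine Filter.tendsto_atTop_mono' Filter.atTop ?_ h4
  exact Filter.eventually_atTop.2 ⟨5, hdrop⟩

end
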